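/- arXiv:2003.10028 — 2 statements merged into one kernel-verified Lean document; each statement's English description precedes it below -/
import Mathlib

section
/- Let h : ℝ → ℝ be continuously differentiable along a solution of an ODE, and suppose ḣ(t) ≥ -α(h(t)) for all t, where α : ℝ → ℝ is locally Lipschitz, strictly increasing, and α(0) = 0. If h(t₀) ≥ 0, then h(t) ≥ 0 for all t ≥ t₀ in the interval of existence. -/
/-!
Where `h ≤ 0`, monotonicity of `α` and `α 0 = 0` give `h' ≥ -α h ≥ 0`, so `h` cannot cross
zero downwards. To make this rigorous, `h` is fenced from below by the barrier
`-ε (t - t₀ + 1)`, which it can only touch where `h ≤ 0` and hence `h' ≥ 0 > -ε`; then `ε → 0`.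
-/

open Set Filter Topology

theorem image_nonneg_of_deriv_right_nonneg_of_nonpos {f f' : ℝ → ℝ} {a b : ℝ}
    (hf : ContinuousOn f (Icc a b)) (hf' : ∀ x ∈ Ico a b, HasDerivWithinAt f (f' x) (Ici x) x)
    (ha : 0 ≤ f a) (bound : ∀ x ∈ Ico a b, f x ≤ 0 → 0 ≤ f' x) :
    ∀ ⦃x⦄, x ∈ Icc a b → 0 ≤ f x := by
  intro x hx
  have fenced : ∀ ε > 0, -f x ≤ ε * (x - a + 1) := fun ε hε =>
    image_le_of_deriv_right_lt_deriv_boundary (f := -f) (B := fun y => ε * (y - a + 1))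
      hf.neg (fun y hy => (hf' y hy).neg) (by simp only [Pi.neg_apply]; nlinarith)
      (fun y => (((hasDerivAt_id y).sub_const a).add_const 1).const_mul ε)
      (fun y hy hfy => by
        have hfy_nonpos : f y ≤ 0 := by
          simp only [Pi.neg_apply] at hfy; nlinarith [hy.1]
        simp only [mul_one]
        linarith [bound y hy hfy_nonpos])
      hx
  have hlim : Tendsto (fun ε : ℝ => ε * (x - a + 1)) (𝓝[>] 0) (𝓝 0) :=
    tendsto_nhdsWithin_of_tendsto_nhds ((continuous_mul_const _).tendsto' 0 0 (zero_mul _))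
  linarith [ge_of_tendsto hlim (eventually_nhdsWithin_of_forall fenced)]

theorem barrier_comparison_general (t₀ T : ℝ) (h h' : ℝ → ℝ) (α : ℝ → ℝ)
    (hα_mono : StrictMono α) (hα0 : α 0 = 0)
    (hderiv : ∀ t ∈ Ico t₀ T, HasDerivAt h (h' t) t)
    (hineq : ∀ t ∈ Ico t₀ T, h' t ≥ -α (h t))
    (h0 : h t₀ ≥ 0) :
    ∀ t ∈ Ico t₀ T, h t ≥ 0 := by
  intro t ht
  have hsub : Icc t₀ t ⊆ Ico t₀ T := Icc_subset_Ico_right ht.2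
  refine image_nonneg_of_deriv_right_nonneg_of_nonpos (f' := h')
    (fun s hs => (hderiv s (hsub hs)).continuousAt.continuousWithinAt)
    (fun s hs => (hderiv s (hsub (Ico_subset_Icc_self hs))).hasDerivWithinAt) h0 ?_ ⟨ht.1, le_rfl⟩
  intro s hs hs_nonpos
  have hα_nonpos : α (h s) ≤ 0 := hα0 ▸ hα_mono.monotone hs_nonpos
  linarith [hineq s (hsub (Ico_subset_Icc_self hs))]

/-- Comparison lemma for barrier functions: if ḣ(t) ≥ -α(h(t)) with α locally
Lipschitz, strictly increasing, α(0) = 0, and h(t₀) ≥ 0, then h(t) ≥ 0 on the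
interval of existence [t₀, T). -/
theorem barrier_comparison (t₀ T : ℝ) (h h' : ℝ → ℝ) (α : ℝ → ℝ)
    (hα_lip : LocallyLipschitz α) (hα_mono : StrictMono α) (hα0 : α 0 = 0)
    (hderiv : ∀ t ∈ Ico t₀ T, HasDerivAt h (h' t) t)
    (hineq : ∀ t ∈ Ico t₀ T, h' t ≥ -α (h t))
    (h0 : h t₀ ≥ 0) :
    ∀ t ∈ Ico t₀ T, h t ≥ 0 :=
  barrier_comparison_general t₀ T h h' α hα_mono hα0 hderiv hineq h0
end

section
/- Let h_r : ℝⁿ × ℝ^p → ℝ be continuously differentiable and define h(t) = h_r(x(t), θ̂(t)) - (1/2)θ̃(t)ᵀΓ⁻¹θ̃(t) along a solution of ẋ = f(x) - Δ(x)ᵀθ + B(x)u(t) with adaptation law θ̂' = ΓΔ(x)(∂h_r/∂x)ᵀ, θ constant, θ̃ = θ̂ - θ. Then ḣ(t) = ∂h_r/∂x · (f(x) - Δ(x)ᵀΛ(x,θ̂) + B(x)u), where Λ(x,θ̂) = θ̂ - Γ(∂h_r/∂θ̂)ᵀ. In particular, if the control u satisfies the RaCBF inequality ∂h_r/∂x ·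 (f - ΔᵀΛ + Bu) ≥ -α(h_r - (1/2)ϑ̃ᵀΓ⁻¹ϑ̃) with ‖θ̃(t)‖ ≤ ‖ϑ̃‖, then ḣ ≥ -α(h). -/
/-!
Along the closed loop, the adaptation law makes the derivative of the Γ⁻¹-weighted parameter
error cancel the unknown term `∂h_r/∂x · Δᵀ θ̃`, so the only parameter left in `ḣ` is the estimate
`θ̂`, shifted by `Γ (∂h_r/∂θ̂)ᵀ` to absorb the drift of `h_r` through `θ̂`. The inequality then
follows since `h ≥ h_r - ½ ϑ̃ᵀΓ⁻¹ϑ̃` and `α` is monotone.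
-/

open Matrix

theorem Matrix.IsSymm.dotProduct_mulVec_comm {R ι : Type*} [CommSemiring R] [Fintype ι]
    {M : Matrix ι ι R} (hM : M.IsSymm) (a b : ι → R) : a ⬝ᵥ (M *ᵥ b) = b ⬝ᵥ (M *ᵥ a) := by
  rw [dotProduct_mulVec, ← mulVec_transpose, hM.eq, dotProduct_comm]

theorem Matrix.IsSymm.mulVec_dotProduct_inv_mulVec {R ι : Type*} [CommRing R] [Fintype ι]
    [DecidableEq ι] {M : Matrix ι ι R} (hM : M.IsSymm) (hdet : IsUnit M.det) (a b : ι → R) :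
    (M *ᵥ a) ⬝ᵥ (M⁻¹ *ᵥ b) = a ⬝ᵥ b := by
  rw [dotProduct_comm, hM.dotProduct_mulVec_comm, mulVec_mulVec, mul_nonsing_inv M hdet,
    one_mulVec, dotProduct_comm]

section

variable {𝕜 ι : Type*} [NontriviallyNormedField 𝕜] [Fintype ι] {v w : 𝕜 → ι → 𝕜} {v' w' : ι → 𝕜}
  {t : 𝕜}

theorem HasDerivAt.dotProduct (hv : HasDerivAt v v' t) (hw : HasDerivAt w w' t) :
    HasDerivAt (fun s => v s ⬝ᵥ w s) (v' ⬝ᵥ w t + v t ⬝ᵥ w') t := by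
  have h := HasDerivAt.fun_sum (u := Finset.univ) fun i _ =>
    (hasDerivAt_pi.mp hv i).mul (hasDerivAt_pi.mp hw i)
  rw [Finset.sum_add_distrib] at h
  exact h

theorem HasDerivAt.const_mulVec {κ : Type*} (M : Matrix κ ι 𝕜) (hw : HasDerivAt w w' t) :
    HasDerivAt (fun s => M *ᵥ w s) (M *ᵥ w') t :=
  hasDerivAt_pi.mpr fun i => by
    have h := (hasDerivAt_const t (M i)).dotProduct hw
    rw [zero_dotProduct, zero_add] at h
    exact h

theorem HasDerivAt.dotProduct_mulVec_self {M : Matrix ι ι 𝕜} (hM : M.IsSymm)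
    (hw : HasDerivAt w w' t) :
    HasDerivAt (fun s => w s ⬝ᵥ (M *ᵥ w s)) (2 * (w' ⬝ᵥ (M *ᵥ w t))) t := by
  convert hw.dotProduct (hw.const_mulVec M) using 1
  rw [hM.dotProduct_mulVec_comm (w t)]
  ring

end

theorem racbf_derivative_general (n m p : ℕ)
    (f : (Fin n → ℝ) → (Fin n → ℝ))
    (Δ : (Fin n → ℝ) → Matrix (Fin p) (Fin n) ℝ)
    (B : (Fin n → ℝ) → Matrix (Fin n) (Fin m) ℝ)
    (Γ : Matrix (Fin p) (Fin p) ℝ) (hΓ : Γ.PosDef)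
    (θ : Fin p → ℝ) (ϑ : Fin p → ℝ)
    (hr : (Fin n → ℝ) → (Fin p → ℝ) → ℝ)
    (α : ℝ → ℝ) (hα_mono : StrictMono α)
    (x : ℝ → (Fin n → ℝ)) (θhat : ℝ → (Fin p → ℝ)) (u : ℝ → (Fin m → ℝ))
    -- gx t, gθ t : gradients of h_r in x and θ̂ along the trajectory
    (gx : ℝ → (Fin n → ℝ)) (gθ : ℝ → (Fin p → ℝ))
    (hadapt : ∀ t, HasDerivAt θhat (Γ *ᵥ (Δ (x t) *ᵥ gx t)) t)
    (hchain : ∀ t, HasDerivAt (fun s => hr (x s) (θhat s))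
      (gx t ⬝ᵥ (f (x t) - (Δ (x t))ᵀ *ᵥ θ + (B (x t)) *ᵥ u t) +
        gθ t ⬝ᵥ (Γ *ᵥ (Δ (x t) *ᵥ gx t))) t)
    -- parameter-error bound ‖θ̃(t)‖ ≤ ‖ϑ̃‖ (in the Γ⁻¹-weighted norm)
    (hbound : ∀ t, (θhat t - θ) ⬝ᵥ (Γ⁻¹ *ᵥ (θhat t - θ)) ≤ ϑ ⬝ᵥ (Γ⁻¹ *ᵥ ϑ)) :
    ∀ t,
      HasDerivAt (fun s => hr (x s) (θhat s)
          - (1 / 2) * ((θhat s - θ) ⬝ᵥ (Γ⁻¹ *ᵥ (θhat s - θ))))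
        (gx t ⬝ᵥ (f (x t) - (Δ (x t))ᵀ *ᵥ (θhat t - Γ *ᵥ gθ t)
          + (B (x t)) *ᵥ u t)) t ∧
      (gx t ⬝ᵥ (f (x t) - (Δ (x t))ᵀ *ᵥ (θhat t - Γ *ᵥ gθ t) + (B (x t)) *ᵥ u t)
          ≥ -α (hr (x t) (θhat t) - (1 / 2) * (ϑ ⬝ᵥ (Γ⁻¹ *ᵥ ϑ))) →
        gx t ⬝ᵥ (f (x t) - (Δ (x t))ᵀ *ᵥ (θhat t - Γ *ᵥ gθ t) + (B (x t)) *ᵥ u t)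
          ≥ -α (hr (x t) (θhat t)
              - (1 / 2) * ((θhat t - θ) ⬝ᵥ (Γ⁻¹ *ᵥ (θhat t - θ))))) := by
  intro t
  have hsymm : Γ.IsSymm := isHermitian_iff_isSymm.mp hΓ.isHermitian
  have hdet : IsUnit Γ.det := (isUnit_iff_isUnit_det Γ).mp hΓ.isUnit
  have herror : HasDerivAt (fun s => (1 / 2) * ((θhat s - θ) ⬝ᵥ (Γ⁻¹ *ᵥ (θhat s - θ))))
      ((Δ (x t) *ᵥ gx t) ⬝ᵥ (θhat t - θ)) t := by
    refine (((hadapt t).sub_const θ).dotProduct_mulVec_self hsymm.inv).const_mul (1 / 2)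
      |>.congr_deriv ?_
    rw [hsymm.mulVec_dotProduct_inv_mulVec hdet]
    ring
  have htranspose : ∀ z, gx t ⬝ᵥ ((Δ (x t))ᵀ *ᵥ z) = z ⬝ᵥ (Δ (x t) *ᵥ gx t) := fun z => by
    rw [dotProduct_comm, mulVec_transpose, ← dotProduct_mulVec]
  refine ⟨?_, fun hu => le_trans ?_ hu⟩
  · refine ((hchain t).sub herror).congr_deriv ?_
    simp only [dotProduct_add, dotProduct_sub, mulVec_sub, htranspose, sub_dotProduct,
      hsymm.dotProduct_mulVec_comm (gθ t), dotProduct_comm (Δ (x t) *ᵥ gx t)]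
    ring
  · exact neg_le_neg (hα_mono.monotone (by linarith [hbound t]))

/-- RaCBF derivative identity: for h(t) = h_r(x(t),θ̂(t)) - (1/2)θ̃ᵀΓ⁻¹θ̃ with
adaptation law θ̂' = ΓΔ(x)(∂h_r/∂x)ᵀ, one has
ḣ = ∂h_r/∂x · (f - ΔᵀΛ(x,θ̂) + Bu); and if u satisfies the RaCBF inequality
with bound ϑ̃ on the parameter error, then ḣ ≥ -α(h). -/
theorem racbf_derivative (n m p : ℕ)
    (f : (Fin n → ℝ) → (Fin n → ℝ))
    (Δ : (Fin n → ℝ) → Matrix (Fin p) (Fin n) ℝ)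
    (B : (Fin n → ℝ) → Matrix (Fin n) (Fin m) ℝ)
    (Γ : Matrix (Fin p) (Fin p) ℝ) (hΓ : Γ.PosDef) (hΓsym : Γ.IsSymm)
    (θ : Fin p → ℝ) (ϑ : Fin p → ℝ)
    (hr : (Fin n → ℝ) → (Fin p → ℝ) → ℝ)
    (α : ℝ → ℝ) (hα_mono : StrictMono α) (hα0 : α 0 = 0)
    (x : ℝ → (Fin n → ℝ)) (θhat : ℝ → (Fin p → ℝ)) (u : ℝ → (Fin m → ℝ))
    -- gx t, gθ t : gradients of h_r in x and θ̂ along the trajectory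
    (gx : ℝ → (Fin n → ℝ)) (gθ : ℝ → (Fin p → ℝ))
    (hdyn : ∀ t, HasDerivAt x (f (x t) - (Δ (x t))ᵀ *ᵥ θ + (B (x t)) *ᵥ u t) t)
    (hadapt : ∀ t, HasDerivAt θhat (Γ *ᵥ (Δ (x t) *ᵥ gx t)) t)
    (hchain : ∀ t, HasDerivAt (fun s => hr (x s) (θhat s))
      (gx t ⬝ᵥ (f (x t) - (Δ (x t))ᵀ *ᵥ θ + (B (x t)) *ᵥ u t) +
        gθ t ⬝ᵥ (Γ *ᵥ (Δ (x t) *ᵥ gx t))) t)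
    -- parameter-error bound ‖θ̃(t)‖ ≤ ‖ϑ̃‖ (in the Γ⁻¹-weighted norm)
    (hbound : ∀ t, (θhat t - θ) ⬝ᵥ (Γ⁻¹ *ᵥ (θhat t - θ)) ≤ ϑ ⬝ᵥ (Γ⁻¹ *ᵥ ϑ)) :
    ∀ t,
      HasDerivAt (fun s => hr (x s) (θhat s)
          - (1 / 2) * ((θhat s - θ) ⬝ᵥ (Γ⁻¹ *ᵥ (θhat s - θ))))
        (gx t ⬝ᵥ (f (x t) - (Δ (x t))ᵀ *ᵥ (θhat t - Γ *ᵥ gθ t)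
          + (B (x t)) *ᵥ u t)) t ∧
      (gx t ⬝ᵥ (f (x t) - (Δ (x t))ᵀ *ᵥ (θhat t - Γ *ᵥ gθ t) + (B (x t)) *ᵥ u t)
          ≥ -α (hr (x t) (θhat t) - (1 / 2) * (ϑ ⬝ᵥ (Γ⁻¹ *ᵥ ϑ))) →
        gx t ⬝ᵥ (f (x t) - (Δ (x t))ᵀ *ᵥ (θhat t - Γ *ᵥ gθ t) + (B (x t)) *ᵥ u t)
          ≥ -α (hr (x t) (θhat t)
              - (1 / 2) * ((θhat t - θ) ⬝ᵥ (Γ⁻¹ *ᵥ (θhat t - θ))))) :=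
  racbf_derivative_general n m p f Δ B Γ hΓ θ ϑ hr α hα_mono x θhat u gx gθ hadapt hchain hbound
end
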